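/- With A(ℓ) := π² (2θ(ℓ) − sin(2θ(ℓ)))/(1 − cos(2θ(ℓ))) and θ(ℓ) defined by ℓ = θ(ℓ)/sin θ(ℓ), θ(ℓ) ∈ (0,π), the function ℓ ↦ A(ℓ)/√(ℓ−1) is increasing on (1, ∞). -/

import Mathlib

/-!
Writing `t = θ(ℓ)`, double-angle formulas give `A = π² (t - sin t cos t) / sin² t` and
`ℓ - 1 = (t - sin t) / sin t`, so `(A / √(ℓ - 1))² = π⁴ · sqRatio t`. Since `ℓ = t / sin t` is
strictly increasing in `t`, it suffices that `sqRatio` is strictly increasing on `(0, π)`; the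
numerator of its derivative factors as
`(t - sin t cos t) sin² t · (3t - 4 sin t + sin t cos t) (sin t - t cos t)`, a product of positive
terms.
-/

open Real Set

lemma pos_of_hasDerivAt_pos_of_eq_zero {f f' : ℝ → ℝ} {b x : ℝ} (hx : x ∈ Ioo 0 b)
    (hf : ∀ y, HasDerivAt f (f' y) y) (h0 : f 0 = 0) (hf' : ∀ y ∈ Ioo 0 b, 0 < f' y) :
    0 < f x := by
  have hmono : StrictMonoOn f (Icc 0 b) :=
    strictMonoOn_of_deriv_pos (convex_Icc 0 b)
      (continuous_iff_continuousAt.2 fun y => (hf y).continuousAt).continuousOn fun y hy => by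
        rw [interior_Icc] at hy
        exact (hf y).deriv ▸ hf' y hy
  simpa [h0] using hmono (left_mem_Icc.2 (hx.1.trans hx.2).le) ⟨hx.1.le, hx.2.le⟩ hx.1

lemma sin_sub_mul_cos_pos {t : ℝ} (ht : t ∈ Ioo 0 π) : 0 < sin t - t * cos t := by
  have hs := sin_pos_of_pos_of_lt_pi ht.1 ht.2
  rcases le_or_gt (cos t) 0 with hc | hc
  · nlinarith [ht.1]
  · have hlt : t < π / 2 := by
      by_contra! h
      exact (cos_nonpos_of_pi_div_two_le_of_le h (by linarith [ht.2])).not_gt hc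
    have := lt_tan ht.1 hlt
    rw [tan_eq_sin_div_cos, lt_div_iff₀ hc] at this
    linarith

lemma three_mul_sub_four_sin_add_sin_mul_cos_pos {t : ℝ} (ht : t ∈ Ioo 0 π) :
    0 < 3 * t - 4 * sin t + sin t * cos t := by
  apply pos_of_hasDerivAt_pos_of_eq_zero ht
  · intro y
    exact (((hasDerivAt_id y).const_mul 3).sub ((hasDerivAt_sin y).const_mul 4)).add
      ((hasDerivAt_sin y).mul (hasDerivAt_cos y))
  · simp
  · intro y hy
    -- the derivative is `2 (1 - cos y)²`
    have hc : cos y < 1 := by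
      simpa using cos_lt_cos_of_nonneg_of_le_pi le_rfl hy.2.le hy.1
    nlinarith [sin_sq_add_cos_sq y]

lemma sin_mul_cos_lt {x : ℝ} (hx : 0 < x) : sin x * cos x < x := by
  have := sin_lt (mul_pos two_pos hx)
  rw [sin_two_mul] at this
  linarith

lemma strictMonoOn_div_sin : StrictMonoOn (fun t => t / sin t) (Ioo 0 π) := by
  refine strictMonoOn_of_deriv_pos (convex_Ioo 0 π) ?_ fun x hx => ?_
  · exact continuousOn_id.div continuousOn_sin fun x hx => (sin_pos_of_pos_of_lt_pi hx.1 hx.2).ne'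
  · rw [interior_Ioo] at hx
    have hs := sin_pos_of_pos_of_lt_pi hx.1 hx.2
    have hd : HasDerivAt (fun t => t / sin t) ((1 * sin x - x * cos x) / sin x ^ 2) x :=
      (hasDerivAt_id x).div (hasDerivAt_sin x) hs.ne'
    rw [hd.deriv, one_mul]
    exact div_pos (sin_sub_mul_cos_pos hx) (pow_pos hs 2)

noncomputable def sqRatio (t : ℝ) : ℝ := (t - sin t * cos t) ^ 2 / (sin t ^ 3 * (t - sin t))

lemma hasDerivAt_sqRatio {x : ℝ} (hx : sin x ^ 3 * (x - sin x) ≠ 0) :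
    HasDerivAt sqRatio ((x - sin x * cos x) * sin x ^ 2 *
      ((3 * x - 4 * sin x + sin x * cos x) * (sin x - x * cos x)) /
        (sin x ^ 3 * (x - sin x)) ^ 2) x := by
  have hnum : HasDerivAt (fun t => (t - sin t * cos t) ^ 2)
      (2 * (x - sin x * cos x) * (1 - (cos x * cos x + sin x * -sin x))) x :=
    (((hasDerivAt_id' x).sub ((hasDerivAt_sin x).mul (hasDerivAt_cos x))).pow 2).congr_deriv
      (by simp only [Pi.sub_apply, Pi.mul_apply]; push_cast; ring)
  have hden : HasDerivAt (fun t => sin t ^ 3 * (t - sin t))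
      (3 * sin x ^ 2 * cos x * (x - sin x) + sin x ^ 3 * (1 - cos x)) x :=
    (((hasDerivAt_sin x).pow 3).mul ((hasDerivAt_id' x).sub (hasDerivAt_sin x))).congr_deriv
      (by simp only [Pi.sub_apply, Pi.pow_apply]; push_cast; ring)
  refine (hnum.div hden hx).congr_deriv ?_
  rw [div_left_inj' (pow_ne_zero 2 hx)]
  linear_combination (2 * sin x ^ 3 * (x - sin x) * (x - sin x * cos x)) * sin_sq_add_cos_sq x

lemma strictMonoOn_sqRatio : StrictMonoOn sqRatio (Ioo 0 π) := by
  have hden : ∀ x ∈ Ioo 0 π, 0 < sin x ^ 3 * (x - sin x) := fun x hx =>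
    mul_pos (pow_pos (sin_pos_of_pos_of_lt_pi hx.1 hx.2) 3) (sub_pos.2 (sin_lt hx.1))
  refine strictMonoOn_of_deriv_pos (convex_Ioo 0 π) ?_ fun x hx => ?_
  · exact fun x hx => (hasDerivAt_sqRatio (hden x hx).ne').continuousAt.continuousWithinAt
  · rw [interior_Ioo] at hx
    rw [(hasDerivAt_sqRatio (hden x hx).ne').deriv]
    have hs := sin_pos_of_pos_of_lt_pi hx.1 hx.2
    exact div_pos (mul_pos (mul_pos (sub_pos.2 (sin_mul_cos_lt hx.1)) (pow_pos hs 2))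
      (mul_pos (three_mul_sub_four_sin_add_sin_mul_cos_pos hx) (sin_sub_mul_cos_pos hx)))
      (pow_pos (hden x hx) 2)

lemma two_mul_sub_sin_two_mul_div (t : ℝ) :
    (2 * t - sin (2 * t)) / (1 - cos (2 * t)) = (t - sin t * cos t) / sin t ^ 2 := by
  have hcos : 1 - cos (2 * t) = 2 * sin t ^ 2 := by rw [cos_two_mul, cos_sq']; ring
  rw [hcos, sin_two_mul, mul_assoc, ← mul_sub, mul_div_mul_left _ _ two_ne_zero]

lemma area_div_sqrt_pos_and_sq {t : ℝ} (ht : t ∈ Ioo 0 π) :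
    0 < π ^ 2 * (2 * t - sin (2 * t)) / (1 - cos (2 * t)) / √(t / sin t - 1) ∧
      (π ^ 2 * (2 * t - sin (2 * t)) / (1 - cos (2 * t)) / √(t / sin t - 1)) ^ 2 =
        π ^ 4 * sqRatio t := by
  have hs := sin_pos_of_pos_of_lt_pi ht.1 ht.2
  have hsub : t / sin t - 1 = (t - sin t) / sin t := by field_simp
  have hpos : 0 < t / sin t - 1 := hsub ▸ div_pos (sub_pos.2 (sin_lt ht.1)) hs
  rw [mul_div_assoc, two_mul_sub_sin_two_mul_div]
  have hN := sub_pos.2 (sin_mul_cos_lt ht.1)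
  refine ⟨by positivity, ?_⟩
  rw [div_pow, sq_sqrt hpos.le, hsub, sqRatio]
  have hts := (sub_pos.2 (sin_lt ht.1)).ne'
  field_simp

lemma strictMonoOn_area_div_sqrt :
    StrictMonoOn (fun t => π ^ 2 * (2 * t - sin (2 * t)) / (1 - cos (2 * t)) / √(t / sin t - 1))
      (Ioo 0 π) := by
  intro a ha b hb hab
  obtain ⟨-, hsq_a⟩ := area_div_sqrt_pos_and_sq ha
  obtain ⟨hpos_b, hsq_b⟩ := area_div_sqrt_pos_and_sq hb
  refine lt_of_pow_lt_pow_left₀ 2 hpos_b.le ?_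
  rw [hsq_a, hsq_b]
  exact mul_lt_mul_of_pos_left (strictMonoOn_sqRatio ha hb hab) (by positivity)

theorem A_div_sqrt_increasing (θ A : ℝ → ℝ)
    (hmem : ∀ ℓ ∈ Set.Ioi (1:ℝ), θ ℓ ∈ Set.Ioo 0 π)
    (heq : ∀ ℓ ∈ Set.Ioi (1:ℝ), ℓ = θ ℓ / Real.sin (θ ℓ))
    (hA : ∀ ℓ ∈ Set.Ioi (1:ℝ),
      A ℓ = π ^ 2 * (2 * θ ℓ - Real.sin (2 * θ ℓ)) / (1 - Real.cos (2 * θ ℓ))) :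
    StrictMonoOn (fun ℓ => A ℓ / Real.sqrt (ℓ - 1)) (Set.Ioi 1) := by
  intro a ha b hb hab
  have hθ : θ a < θ b := by
    rw [← strictMonoOn_div_sin.lt_iff_lt (hmem a ha) (hmem b hb)]
    simpa only [← heq a ha, ← heq b hb] using hab
  have key := strictMonoOn_area_div_sqrt (hmem a ha) (hmem b hb) hθ
  beta_reduce at key ⊢
  rwa [← heq a ha, ← heq b hb, ← hA a ha, ← hA b hb] at key
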